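/- arXiv:2601.10793 — 2 statements merged into one kernel-verified Lean document; each statement's English description precedes it below -/
import Mathlib

section
/- Let φ : ℝ → ℝ be continuous and let m > 1 be real. Then lim_{t→0} (sign(t)·∫₀ᵗ φ(x)|x|^{m-1} dx) / |t|^m = φ(0)/m. -/
/-! Since `∫₀ᵗ |x|^(m-1) dx = sign t · |t|^m / m`, the quotient is `1/m` times the mean of `φ`
over `[0, t]` with respect to the weight `|x|^(m-1)`; a weighted mean of a continuous function
over a shrinking interval tends to its value at the fixed endpoint. -/

open Filter Topology Set intervalIntegral

lemma integral_abs_rpow_sub_one_of_nonneg {m t : ℝ} (hm : 0 < m) (ht : 0 ≤ t) :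
    ∫ x in (0:ℝ)..t, |x| ^ (m - 1) = t ^ m / m := by
  have habs : EqOn (fun x : ℝ => |x| ^ (m - 1)) (fun x => x ^ (m - 1)) (uIcc 0 t) := by
    intro x hx
    rw [uIcc_of_le ht] at hx
    simp only [abs_of_nonneg hx.1]
  rw [integral_congr habs, integral_rpow (Or.inl (by linarith)), sub_add_cancel,
    Real.zero_rpow hm.ne', sub_zero]

lemma integral_abs_rpow_sub_one {m : ℝ} (hm : 0 < m) (t : ℝ) :
    ∫ x in (0:ℝ)..t, |x| ^ (m - 1) = Real.sign t * |t| ^ m / m := by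
  rcases lt_trichotomy t 0 with ht | rfl | ht
  · have hneg := integral_comp_neg (a := 0) (b := -t) (fun x : ℝ => |x| ^ (m - 1))
    simp only [abs_neg, neg_neg, neg_zero] at hneg
    rw [integral_symm, ← hneg, integral_abs_rpow_sub_one_of_nonneg hm (by linarith),
      Real.sign_of_neg ht, abs_of_neg ht]
    ring
  · simp [Real.zero_rpow hm.ne']
  · rw [integral_abs_rpow_sub_one_of_nonneg hm ht.le, Real.sign_of_pos ht, abs_of_pos ht, one_mul]

lemma abs_integral_mul_sub_le {φ w : ℝ → ℝ} {a t ε : ℝ} (hφ : Continuous φ) (hw : Continuous w)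
    (hw0 : ∀ x, 0 ≤ w x) (hε : ∀ x ∈ uIcc a t, |φ x - φ a| ≤ ε) :
    |(∫ x in a..t, φ x * w x) - φ a * ∫ x in a..t, w x| ≤ ε * |∫ x in a..t, w x| := by
  have hε0 : 0 ≤ ε := by simpa using hε a left_mem_uIcc
  have hdev : ∀ x ∈ uIoc a t, ‖(φ x - φ a) * w x‖ ≤ ε * w x := fun x hx => by
    rw [Real.norm_eq_abs, abs_mul, abs_of_nonneg (hw0 x)]
    exact mul_le_mul_of_nonneg_right (hε x (uIoc_subset_uIcc hx)) (hw0 x)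
  calc |(∫ x in a..t, φ x * w x) - φ a * ∫ x in a..t, w x|
      = ‖∫ x in a..t, (φ x - φ a) * w x‖ := by
        simp_rw [sub_mul, ← integral_const_mul]
        rw [integral_sub (f := fun x => φ x * w x) (g := fun x => φ a * w x)
          ((hφ.mul hw).intervalIntegrable a t) ((continuous_const.mul hw).intervalIntegrable a t),
          Real.norm_eq_abs]
    _ ≤ |∫ x in a..t, ε * w x| :=
        norm_integral_le_abs_of_norm_le ((MeasureTheory.ae_restrict_iff' measurableSet_uIoc).2
          (Eventually.of_forall hdev)) ((continuous_const.mul hw).intervalIntegrable a t)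
    _ = ε * |∫ x in a..t, w x| := by rw [integral_const_mul, abs_mul, abs_of_nonneg hε0]

theorem tendsto_integral_mul_div_integral {φ w : ℝ → ℝ} {a : ℝ} (hφ : Continuous φ)
    (hw : Continuous w) (hw0 : ∀ x, 0 ≤ w x) (hne : ∀ t ≠ a, ∫ x in a..t, w x ≠ 0) :
    Tendsto (fun t => (∫ x in a..t, φ x * w x) / ∫ x in a..t, w x) (𝓝[≠] a) (𝓝 (φ a)) := by
  rw [Metric.tendsto_nhdsWithin_nhds]
  intro ε hε
  obtain ⟨δ, hδ, hφδ⟩ := Metric.continuous_iff.1 hφ a (ε / 2) (half_pos hε)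
  refine ⟨δ, hδ, fun t (hta : t ≠ a) htδ => ?_⟩
  have hW : 0 < |∫ x in a..t, w x| := abs_pos.2 (hne t hta)
  have hclose : ∀ x ∈ uIcc a t, |φ x - φ a| ≤ ε / 2 := fun x hx =>
    (hφδ x ((abs_sub_left_of_mem_uIcc hx).trans_lt htδ)).le
  rw [Real.dist_eq, div_sub' (hne t hta), abs_div, div_lt_iff₀ hW, mul_comm _ (φ a)]
  calc _ ≤ ε / 2 * |∫ x in a..t, w x| := abs_integral_mul_sub_le hφ hw hw0 hclose
    _ < ε * |∫ x in a..t, w x| := by gcongr; exact half_lt_self hε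

/-- Rule H, case `n = m - 1`: for continuous `φ` and real `m > 1`,
`lim_{t→0} (sign(t) · ∫₀ᵗ φ(x)|x|^{m-1} dx) / |t|^m = φ(0)/m`. -/
theorem ruleH_limit (φ : ℝ → ℝ) (hφ : Continuous φ) (m : ℝ) (hm : 1 < m) :
    Filter.Tendsto
      (fun t : ℝ => (Real.sign t * ∫ x in (0:ℝ)..t, φ x * |x| ^ (m - 1)) / |t| ^ m)
      (nhdsWithin 0 {(0:ℝ)}ᶜ) (nhds (φ 0 / m)) := by
  have hm0 : 0 < m := by linarith
  have hw : Continuous fun x : ℝ => |x| ^ (m - 1) :=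
    continuous_abs.rpow_const fun _ => Or.inr (by linarith)
  have hne : ∀ t ≠ 0, ∫ x in (0:ℝ)..t, |x| ^ (m - 1) ≠ 0 := fun t ht => by
    rw [integral_abs_rpow_sub_one hm0]
    exact div_ne_zero (mul_ne_zero (Real.sign_eq_zero_iff.not.2 ht)
      (Real.rpow_pos_of_pos (abs_pos.2 ht) m).ne') hm0.ne'
  refine ((tendsto_integral_mul_div_integral hφ hw (fun _ => by positivity) hne).div_const m).congr'
    (eventually_nhdsWithin_of_forall fun t (ht : t ≠ 0) => ?_)
  rw [integral_abs_rpow_sub_one hm0]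
  field_simp
  rw [div_eq_mul_inv, Real.inv_sign]
end

section
/- Let r > -1 and let ψ : (-ε, ε) → ℝ be continuous with ψ(0) > 0. Define F(t) = sign(t)·|∫₀ᵗ |x|^r ψ(x) dx|^{1/(r+1)} for t ∈ (-ε, ε) near 0. Then F is differentiable at 0 with F'(0) = (r+1)^{-1/(r+1)}·ψ(0)^{1/(r+1)} > 0. -/
open Set

open MeasureTheory intervalIntegral Filter in
private lemma bald_int_abs_rpow {r : ℝ} (hr : -1 < r) (a b : ℝ) :
    IntervalIntegrable (fun x => |x| ^ r) volume a b := by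
  suffices h : ∀ c : ℝ, 0 ≤ c → IntervalIntegrable (fun x => |x| ^ r) volume 0 c by
    have h' : ∀ c : ℝ, IntervalIntegrable (fun x => |x| ^ r) volume 0 c := by
      intro c
      rcases le_total 0 c with hc | hc
      · exact h c hc
      · rw [IntervalIntegrable.iff_comp_neg]
        simpa using h (-c) (by linarith)
    exact (h' a).symm.trans (h' b)
  intro c hc
  have h0 := intervalIntegrable_rpow' (a := 0) (b := c) hr
  rw [intervalIntegrable_iff] at h0 ⊢
  refine h0.congr_fun ?_ measurableSet_uIoc
  intro x hx
  rw [uIoc_of_le hc] at hx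
  show x ^ r = |x| ^ r
  rw [abs_of_pos hx.1]

open MeasureTheory intervalIntegral in
private lemma bald_val {r : ℝ} (hr : -1 < r) {t : ℝ} (ht : 0 ≤ t) :
    ∫ x in (0:ℝ)..t, |x| ^ r = t ^ (r + 1) / (r + 1) := by
  have h1 : ∫ x in (0:ℝ)..t, |x| ^ r = ∫ x in (0:ℝ)..t, x ^ r := by
    apply intervalIntegral.integral_congr
    intro x hx
    rw [uIcc_of_le ht] at hx
    show |x| ^ r = x ^ r
    rw [abs_of_nonneg hx.1]
  rw [h1, integral_rpow (Or.inl hr), Real.zero_rpow (by linarith), sub_zero]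

open MeasureTheory intervalIntegral in
private lemma bald_val_neg {r : ℝ} (hr : -1 < r) {t : ℝ} (ht : t ≤ 0) :
    ∫ x in t..(0:ℝ), |x| ^ r = (-t) ^ (r + 1) / (r + 1) := by
  have h1 : ∫ x in t..(0:ℝ), |x| ^ r = ∫ x in t..(0:ℝ), |(-x)| ^ r := by
    simp [abs_neg]
  rw [h1, intervalIntegral.integral_comp_neg (fun x => |x| ^ r), neg_zero]
  exact bald_val hr (by linarith)

open MeasureTheory intervalIntegral in
private lemma bald_est {r : ℝ} (hr : -1 < r) {g : ℝ → ℝ} {a b δ : ℝ} (hab : a ≤ b)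
    (hg : ContinuousOn g (uIcc a b)) (hδ : ∀ x ∈ uIcc a b, |g x| ≤ δ) :
    |∫ x in a..b, |x| ^ r * g x| ≤ δ * ∫ x in a..b, |x| ^ r := by
  have hJ := bald_int_abs_rpow hr a b
  have habs : IntervalIntegrable (fun x => |x| ^ r * |g x|) volume a b :=
    hJ.mul_continuousOn hg.abs
  have e1 : ∫ x in a..b, ‖|x| ^ r * g x‖ = ∫ x in a..b, |x| ^ r * |g x| := by
    apply intervalIntegral.integral_congr
    intro x _
    simp [Real.norm_eq_abs, abs_mul, abs_of_nonneg (Real.rpow_nonneg (abs_nonneg x) r)]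
  have e2 : (0:ℝ) ≤ ∫ x in a..b, |x| ^ r * |g x| := by
    apply intervalIntegral.integral_nonneg hab
    intro x _
    positivity
  have e3 : ∫ x in a..b, |x| ^ r * |g x| ≤ ∫ x in a..b, δ * |x| ^ r := by
    apply intervalIntegral.integral_mono_on hab habs (hJ.const_mul δ)
    intro x hx
    rw [mul_comm δ]
    exact mul_le_mul_of_nonneg_left (hδ x (by rwa [uIcc_of_le hab]))
      (Real.rpow_nonneg (abs_nonneg x) r)
  have e0 : |∫ x in a..b, |x| ^ r * g x| ≤ |∫ x in a..b, ‖|x| ^ r * g x‖| := by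
    rw [← Real.norm_eq_abs (∫ x in a..b, |x| ^ r * g x)]
    exact intervalIntegral.norm_integral_le_abs_integral_norm
  calc |∫ x in a..b, |x| ^ r * g x| ≤ |∫ x in a..b, ‖|x| ^ r * g x‖| := e0
    _ = ∫ x in a..b, |x| ^ r * |g x| := by rw [e1, abs_of_nonneg e2]
    _ ≤ ∫ x in a..b, δ * |x| ^ r := e3
    _ = δ * ∫ x in a..b, |x| ^ r := intervalIntegral.integral_const_mul δ _

/-- Special case of Baldomero's theorem: for `r > -1` and `ψ` continuous on `(-ε,ε)`
with `ψ(0) > 0`, the function `F(t) = sign(t)·|∫₀ᵗ |x|^r ψ(x) dx|^{1/(r+1)}` is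
differentiable at `0` with `F'(0) = (r+1)^{-1/(r+1)}·ψ(0)^{1/(r+1)} > 0`. -/
theorem baldomero_derivAt_zero (ε r : ℝ) (hε : 0 < ε) (hr : -1 < r) (ψ : ℝ → ℝ)
    (hψ : ContinuousOn ψ (Ioo (-ε) ε)) (hψ0 : 0 < ψ 0) :
    HasDerivAt
      (fun t : ℝ => Real.sign t * |∫ x in (0:ℝ)..t, |x| ^ r * ψ x| ^ (1 / (r + 1)))
      ((r + 1) ^ (-(1 / (r + 1))) * ψ 0 ^ (1 / (r + 1))) 0 ∧
    0 < (r + 1) ^ (-(1 / (r + 1))) * ψ 0 ^ (1 / (r + 1)) := by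
  have hp : (0:ℝ) < r + 1 := by linarith
  set p : ℝ := 1 / (r + 1) with hpdef
  have hppos : 0 < p := by positivity
  refine ⟨?_, mul_pos (Real.rpow_pos_of_pos hp _) (Real.rpow_pos_of_pos hψ0 _)⟩
  have hkey : (r + 1) ^ (-p) * ψ 0 ^ p = (ψ 0 / (r + 1)) ^ p := by
    rw [Real.div_rpow hψ0.le hp.le, Real.rpow_neg hp.le, div_eq_mul_inv, mul_comm]
  rw [hkey, hasDerivAt_iff_tendsto_slope]
  set I : ℝ → ℝ := fun t => ∫ x in (0:ℝ)..t, |x| ^ r * ψ x with hIdef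
  have hB : Filter.Tendsto (fun t => |I t| / |t| ^ (r + 1)) (nhdsWithin 0 {(0:ℝ)}ᶜ)
      (nhds (ψ 0 / (r + 1))) := by
    rw [Metric.tendsto_nhdsWithin_nhds]
    intro δ hδ
    set δ' := δ * (r + 1) / 2 with hδ'def
    have hδ'pos : 0 < δ' := by positivity
    have hψc : ContinuousAt ψ 0 := hψ.continuousAt (Ioo_mem_nhds (by linarith) hε)
    obtain ⟨η₀, hη₀, hcont⟩ := Metric.continuousAt_iff.mp hψc δ' hδ'pos
    refine ⟨min η₀ ε, lt_min hη₀ hε, ?_⟩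
    intro t ht htd
    rw [dist_zero_right, Real.norm_eq_abs] at htd
    have ht0 : t ≠ 0 := ht
    have htε : |t| < ε := lt_of_lt_of_le htd (min_le_right _ _)
    have htη : |t| < η₀ := lt_of_lt_of_le htd (min_le_left _ _)
    have habslt := abs_lt.mp htε
    have hmem : uIcc (0:ℝ) t ⊆ Ioo (-ε) ε :=
      Set.ordConnected_Ioo.uIcc_subset ⟨by linarith, hε⟩ ⟨habslt.1, habslt.2⟩
    have huIcc : uIcc (0:ℝ) t ⊆ Icc (-|t|) (|t|) :=
      Set.ordConnected_Icc.uIcc_subset ⟨neg_nonpos.mpr (abs_nonneg t), abs_nonneg t⟩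
        ⟨neg_abs_le t, le_abs_self t⟩
    have hbound : ∀ x ∈ uIcc (0:ℝ) t, |ψ x - ψ 0| ≤ δ' := by
      intro x hx
      have hxt : |x| ≤ |t| := abs_le.mpr ⟨(huIcc hx).1, (huIcc hx).2⟩
      have := hcont (show dist x 0 < η₀ by
        rw [Real.dist_eq, sub_zero]; exact lt_of_le_of_lt hxt htη)
      rw [Real.dist_eq] at this
      exact this.le
    have hgcont : ContinuousOn (fun x => ψ x - ψ 0) (uIcc (0:ℝ) t) :=
      (hψ.mono hmem).sub continuousOn_const
    have hJ := bald_int_abs_rpow hr 0 t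
    have hIint : IntervalIntegrable (fun x => |x| ^ r * ψ x) MeasureTheory.volume 0 t :=
      hJ.mul_continuousOn (hψ.mono hmem)
    set Jt : ℝ := ∫ x in (0:ℝ)..t, |x| ^ r with hJtdef
    have hsub : I t - ψ 0 * Jt = ∫ x in (0:ℝ)..t, |x| ^ r * (ψ x - ψ 0) := by
      rw [hIdef, hJtdef, ← intervalIntegral.integral_const_mul,
        ← intervalIntegral.integral_sub hIint (hJ.const_mul (ψ 0))]
      apply intervalIntegral.integral_congr
      intro x _
      ring
    -- establish |Jt| = |t|^(r+1)/(r+1) and |I t - ψ 0 * Jt| ≤ δ' * |Jt|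
    have hmain : |Jt| = |t| ^ (r + 1) / (r + 1) ∧ |I t - ψ 0 * Jt| ≤ δ' * |Jt| := by
      rcases ht0.lt_or_gt with hneg | hpos
      · have hJval : ∫ x in t..(0:ℝ), |x| ^ r = (-t) ^ (r + 1) / (r + 1) :=
          bald_val_neg hr hneg.le
        have hJt : Jt = -((-t) ^ (r + 1) / (r + 1)) := by
          rw [hJtdef, ← hJval, intervalIntegral.integral_symm]
        have habst : |t| = -t := abs_of_neg hneg
        have hJabs : |Jt| = |t| ^ (r + 1) / (r + 1) := by
          rw [hJt, abs_neg, habst,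
            abs_of_nonneg (div_nonneg (Real.rpow_nonneg (by linarith) _) (by linarith))]
        refine ⟨hJabs, ?_⟩
        have h1 : I t - ψ 0 * Jt = -(∫ x in t..(0:ℝ), |x| ^ r * (ψ x - ψ 0)) := by
          rw [hsub, intervalIntegral.integral_symm]
        have h2 := bald_est hr (δ := δ') hneg.le
          (by rwa [uIcc_comm] : ContinuousOn (fun x => ψ x - ψ 0) (uIcc t 0))
          (fun x hx => hbound x (by rwa [uIcc_comm] at hx))
        rw [h1, abs_neg]
        calc |∫ x in t..(0:ℝ), |x| ^ r * (ψ x - ψ 0)|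
            ≤ δ' * ∫ x in t..(0:ℝ), |x| ^ r := h2
          _ = δ' * |Jt| := by rw [hJval, hJabs, habst]
      · have hJval : Jt = t ^ (r + 1) / (r + 1) := bald_val hr hpos.le
        have habst : |t| = t := abs_of_pos hpos
        have hJabs : |Jt| = |t| ^ (r + 1) / (r + 1) := by
          rw [hJval, habst,
            abs_of_nonneg (div_nonneg (Real.rpow_nonneg hpos.le _) (by linarith))]
        refine ⟨hJabs, ?_⟩
        rw [hsub]
        calc |∫ x in (0:ℝ)..t, |x| ^ r * (ψ x - ψ 0)|
            ≤ δ' * ∫ x in (0:ℝ)..t, |x| ^ r := bald_est hr hpos.le hgcont hbound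
          _ = δ' * |Jt| := by rw [← hJtdef, hJabs, hJval, habst]
    obtain ⟨hJabs, hdiff⟩ := hmain
    have hM : 0 < |t| ^ (r + 1) := Real.rpow_pos_of_pos (abs_pos.mpr ht0) _
    have h5 : abs (abs (I t) - ψ 0 * abs Jt) ≤ δ' * abs Jt := by
      calc abs (abs (I t) - ψ 0 * abs Jt) = abs (abs (I t) - abs (ψ 0 * Jt)) := by
            rw [abs_mul, abs_of_pos hψ0]
        _ ≤ |I t - ψ 0 * Jt| := abs_abs_sub_abs_le_abs_sub _ _
        _ ≤ δ' * |Jt| := hdiff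
    rw [Real.dist_eq]
    have heq : |I t| / |t| ^ (r + 1) - ψ 0 / (r + 1)
        = (abs (I t) - ψ 0 * abs Jt) / |t| ^ (r + 1) := by
      rw [hJabs]
      field_simp
    rw [heq, abs_div, abs_of_pos hM]
    have h6 : abs (abs (I t) - ψ 0 * abs Jt) / |t| ^ (r + 1) ≤ δ' * abs Jt / |t| ^ (r + 1) := by
      gcongr
    have h7 : δ' * |Jt| / |t| ^ (r + 1) = δ / 2 := by
      rw [hJabs, hδ'def]
      field_simp
    calc abs (abs (I t) - ψ 0 * abs Jt) / |t| ^ (r + 1) ≤ δ' * abs Jt / |t| ^ (r + 1) := h6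
      _ = δ / 2 := h7
      _ < δ := by linarith
  have hC : Filter.Tendsto (fun t => (|I t| / |t| ^ (r + 1)) ^ p)
      (nhdsWithin 0 {(0:ℝ)}ᶜ) (nhds ((ψ 0 / (r + 1)) ^ p)) :=
    (Real.continuousAt_rpow_const _ p (Or.inr hppos.le)).tendsto.comp hB
  refine hC.congr' ?_
  filter_upwards [self_mem_nhdsWithin] with t ht
  have ht0 : t ≠ 0 := ht
  have h1 : (|t| ^ (r + 1)) ^ p = |t| := by
    rw [← Real.rpow_mul (abs_nonneg t)]
    have : (r + 1) * p = 1 := by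
      rw [hpdef]
      field_simp
    rw [this, Real.rpow_one]
  have h2 : (|I t| / |t| ^ (r + 1)) ^ p = |I t| ^ p / |t| := by
    rw [Real.div_rpow (abs_nonneg _) (Real.rpow_nonneg (abs_nonneg t) _), h1]
  rw [h2, slope_def_field]
  simp only [Real.sign_zero, zero_mul, sub_zero]
  rcases ht0.lt_or_gt with h | h
  · rw [Real.sign_of_neg h, abs_of_neg h]
    field_simp
    rfl
  · rw [Real.sign_of_pos h, abs_of_pos h]
    field_simp
    rfl
end
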